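/- Soundness of STL robustness for the until operator: let f, g : ℝ → ℝ (the robustness signals of subformulas φ₁ and φ₂), let t ∈ ℝ and 0 ≤ a ≤ b. If the until-robustness sSup { min(g(t'), sInf { f(t'') : t'' ∈ [t, t'] }) : t' ∈ [t+a, t+b] } is strictly positive, then there exists t' ∈ [t+a, t+b] such that g(t') > 0 and f(t'') > 0 for all t'' ∈ [t, t'); i.e., the Boolean until semantics φ₁ U_{[a,b]} φ₂ holds at time t whenever each subformula's Boolean satisfaction at a time is equivalent to strict positivity of its robustness signal at that time. -/
import Mathlib


/-- soundness of STL robustness for the *until* operator. If the until-robustness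
`sup_{t' ∈ [t+a,t+b]} min( g t', inf_{t'' ∈ [t,t']} f t'' )` is strictly positive, then there is
`t' ∈ [t+a,t+b]` with `g t' > 0` and `f t'' > 0` for all `t'' ∈ [t, t')`. -/
theorem stl_until_robustness_sound
    (f g : ℝ → ℝ) (t a b : ℝ) (ha : 0 ≤ a) (hab : a ≤ b)
    (hpos : 0 < sSup ((fun t' => min (g t') (sInf (f '' Set.Icc t t'))) ''
      Set.Icc (t + a) (t + b))) :
    ∃ t' ∈ Set.Icc (t + a) (t + b), 0 < g t' ∧ ∀ t'' ∈ Set.Ico t t', 0 < f t'' := by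
  set S := (fun t' => min (g t') (sInf (f '' Set.Icc t t'))) '' Set.Icc (t + a) (t + b) with hS
  have hne : S.Nonempty := by
    refine ⟨_, ⟨t + a, ⟨le_refl _, by linarith⟩, rfl⟩⟩
  -- there is an element of S that is positive
  have hex : ∃ x ∈ S, 0 < x := by
    by_contra h
    push_neg at h
    have : sSup S ≤ 0 := Real.sSup_le h le_rfl
    linarith
  obtain ⟨x, ⟨t', ht', hx⟩, hxpos⟩ := hex
  refine ⟨t', ht', ?_, ?_⟩
  · have := hxpos
    rw [← hx] at this
    exact lt_of_lt_of_le this (min_le_left _ _)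
  · have hinf : 0 < sInf (f '' Set.Icc t t') := by
      have := hxpos
      rw [← hx] at this
      exact lt_of_lt_of_le this (min_le_right _ _)
    intro t'' ht''
    have hmem : f t'' ∈ f '' Set.Icc t t' :=
      ⟨t'', ⟨ht''.1, le_of_lt ht''.2⟩, rfl⟩
    have hbdd : BddBelow (f '' Set.Icc t t') := by
      by_contra hb
      rw [Real.sInf_of_not_bddBelow hb] at hinf
      exact lt_irrefl _ hinf
    have := csInf_le hbdd hmem
    linarith
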